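/- Let c ≥ 1 be an integer and let z > 0 be a rational number. Then for a rational number y, one has y = c + 1/z if and only if y/(y−1) = [2, 2, …, 2, 1+z]^-, where the coefficient sequence consists of c − 1 copies of 2 followed by 1 + z. (In particular, for such y one has y > 1, so y/(y−1) is defined.) -/

import Mathlib

/-- Negative continued fraction `[c₁, …, cₙ]⁻ = c₁ - 1/[c₂, …, cₙ]⁻` of a
finite sequence of rationals (junk value `0` on the empty list). -/
def negCF : List ℚ → ℚ
  | [] => 0
  | [c] => c
  | c :: d :: t => c - 1 / negCF (d :: t)

/-! Writing `c + 1/z = 1 + x` with `x = (c - 1) + 1/z > 0`, both sides of the equivalence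
are the statement `y - 1 = x`: the continued fraction `[2, …, 2, 1 + z]⁻` with `n` twos equals
`1 + 1/(n + 1/z)`, and `y/(y - 1) = 1 + 1/(y - 1)`. -/

lemma negCF_cons (a : ℚ) {l : List ℚ} (hl : l ≠ []) : negCF (a :: l) = a - 1 / negCF l := by
  cases l with
  | nil => exact absurd rfl hl
  | cons d t => rfl

lemma negCF_replicate_two_append {z : ℚ} (hz : 0 < z) (n : ℕ) :
    negCF (List.replicate n 2 ++ [1 + z]) = 1 + ((n : ℚ) + z⁻¹)⁻¹ := by
  induction n with
  | zero => simp [negCF]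
  | succ k ih =>
    have hx : 0 < (k : ℚ) + z⁻¹ := by positivity
    rw [List.replicate_succ, List.cons_append, negCF_cons _ (by simp), ih]
    push_cast
    field_simp
    ring

lemma div_sub_one_eq_one_add_inv_iff {K : Type*} [Field K] {x y : K} (hx₀ : x ≠ 0)
    (hx₁ : x ≠ -1) : y / (y - 1) = 1 + x⁻¹ ↔ y = 1 + x := by
  rcases eq_or_ne y 1 with rfl | hy
  · have : 1 + x⁻¹ ≠ 0 := fun h => hx₁ (by
      rw [← inv_inj, inv_neg, inv_one]; linear_combination h)
    simpa [eq_comm, hx₀] using this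
  · have hy' : y - 1 ≠ 0 := sub_ne_zero.mpr hy
    have : y / (y - 1) = 1 + (y - 1)⁻¹ := by field_simp; ring
    rw [this, add_right_inj, inv_inj, sub_eq_iff_eq_add']

/-- For an integer `c ≥ 1` and a rational `z > 0`, a rational `y` satisfies
`y = c + 1/z` if and only if `y/(y-1) = [2, …, 2, 1+z]⁻`, where there are
`c - 1` copies of `2`. In particular for such `y` one has `y > 1`. -/
theorem stmt7 (c : ℤ) (hc : 1 ≤ c) (z : ℚ) (hz : 0 < z) (y : ℚ) :
    (y = (c : ℚ) + 1 / z → 1 < y) ∧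
    (y = (c : ℚ) + 1 / z ↔
      y / (y - 1) = negCF (List.replicate (c - 1).toNat (2 : ℚ) ++ [1 + z])) := by
  set x : ℚ := ((c - 1 : ℤ) : ℚ) + z⁻¹ with hx_def
  have hx : 0 < x := by
    have : (0 : ℚ) ≤ ((c - 1 : ℤ) : ℚ) := by exact_mod_cast sub_nonneg.mpr hc
    positivity
  have hy : (c : ℚ) + 1 / z = 1 + x := by push_cast [hx_def]; ring
  have hcf : negCF (List.replicate (c - 1).toNat 2 ++ [1 + z]) = 1 + x⁻¹ := by
    rw [negCF_replicate_two_append hz, ← Int.cast_natCast, Int.toNat_of_nonneg (by omega)]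
  rw [hy, hcf, div_sub_one_eq_one_add_inv_iff hx.ne' (by linarith)]
  exact ⟨fun h => by linarith, Iff.rfl⟩
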